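/- The finite-pulse correction factor C_{δ,Δ} = (4/35)·[(Δ+δ)^{7/2} + (Δ−δ)^{7/2} − 2(δ^{7/2} + Δ^{7/2})] / [δ²(Δ − δ/3)] satisfies the asymptotic expansion C_{δ,Δ} = √Δ · (1 + (1/3)(δ/Δ) − (8/35)(δ/Δ)^{3/2} + O((δ/Δ)²)) as δ/Δ → 0. -/

import Mathlib

/-!
Let `G(δ) = (Δ+δ)^{7/2} + (Δ-δ)^{7/2} - 2Δ^{7/2} - (35/4)Δ^{3/2}δ²`. Its third derivative is
`(105/8)(√(Δ+t) - √(Δ-t))`, which lies between `0` and `(105/4) t/√Δ`; since `G` and its first two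
derivatives vanish at `0`, integrating three times gives `0 ≤ G(δ) ≤ (35/32) δ⁴/√Δ` for `0 ≤ δ < Δ`.
Writing `Δ = w²`, `δ = s²`, the difference between `C_{δ,Δ}` and the expansion is exactly
`(4/35 G + s⁸/(9w) - (8/105) s⁹/w²) / (s⁴(w² - s²/3))`, which is at most `√Δ (δ/Δ)²` in absolute
value on all of `0 < δ < Δ`.
-/

open Real Filter Topology Asymptotics Set
open scoped Nat

lemma le_of_hasDerivAt_le {f g f' g' : ℝ → ℝ} {a b : ℝ} (hab : a ≤ b)
    (hf : ∀ t ∈ Icc a b, HasDerivAt f (f' t) t) (hg : ∀ t ∈ Icc a b, HasDerivAt g (g' t) t)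
    (ha : f a ≤ g a) (h' : ∀ t ∈ Icc a b, f' t ≤ g' t) : f b ≤ g b := by
  have hdiff : ∀ t ∈ Icc a b, HasDerivAt (g - f) (g' t - f' t) t :=
    fun t ht => (hg t ht).sub (hf t ht)
  have hmono : MonotoneOn (g - f) (Icc a b) := by
    refine monotoneOn_of_hasDerivWithinAt_nonneg (f' := g' - f') (convex_Icc a b)
      (fun t ht => (hdiff t ht).continuousAt.continuousWithinAt) (fun t ht => ?_)
      (fun t ht => ?_) <;> rw [interior_Icc] at ht
    · exact (hdiff t (Ioo_subset_Icc_self ht)).hasDerivWithinAt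
    · exact sub_nonneg.2 (h' t (Ioo_subset_Icc_self ht))
  have := hmono (left_mem_Icc.2 hab) (right_mem_Icc.2 hab) hab
  simp only [Pi.sub_apply] at this
  linarith

lemma bounds_of_hasDerivAt_bounds {f f' : ℝ → ℝ} {K δ : ℝ} {n : ℕ}
    (hf : ∀ t ∈ Icc 0 δ, HasDerivAt f (f' t) t) (h0 : f 0 = 0)
    (h' : ∀ t ∈ Icc 0 δ, 0 ≤ f' t ∧ f' t ≤ K * t ^ n / n !) :
    ∀ t ∈ Icc 0 δ, 0 ≤ f t ∧ f t ≤ K * t ^ (n + 1) / (n + 1)! := by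
  intro t ht
  have hsub : Icc 0 t ⊆ Icc 0 δ := Icc_subset_Icc_right ht.2
  constructor
  · exact le_of_hasDerivAt_le (f := fun _ => 0) ht.1 (fun s _ => hasDerivAt_const s 0)
      (fun s hs => hf s (hsub hs)) h0.ge (fun s hs => (h' s (hsub hs)).1)
  · refine le_of_hasDerivAt_le (g := fun s => K * s ^ (n + 1) / (n + 1)!) ht.1
      (fun s hs => hf s (hsub hs)) (fun s _ => ?_) (by simp [h0])
      (fun s hs => (h' s (hsub hs)).2)
    refine (((hasDerivAt_pow (n + 1) s).const_mul K).div_const _).congr_deriv ?_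
    rw [Nat.factorial_succ]
    push_cast
    field_simp

lemma hasDerivAt_rpow_add_add_rpow_sub {Δ p t : ℝ} (h₁ : Δ + t ≠ 0 ∨ 1 ≤ p)
    (h₂ : Δ - t ≠ 0 ∨ 1 ≤ p) :
    HasDerivAt (fun s => (Δ + s) ^ p + (Δ - s) ^ p)
      (p * ((Δ + t) ^ (p - 1) - (Δ - t) ^ (p - 1))) t := by
  refine ((((hasDerivAt_id' t).const_add Δ).rpow_const h₁).add
    (((hasDerivAt_id' t).const_sub Δ).rpow_const h₂)).congr_deriv ?_
  ring

lemma hasDerivAt_rpow_add_sub_rpow_sub {Δ p t : ℝ} (h₁ : Δ + t ≠ 0 ∨ 1 ≤ p)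
    (h₂ : Δ - t ≠ 0 ∨ 1 ≤ p) :
    HasDerivAt (fun s => (Δ + s) ^ p - (Δ - s) ^ p)
      (p * ((Δ + t) ^ (p - 1) + (Δ - t) ^ (p - 1))) t := by
  refine ((((hasDerivAt_id' t).const_add Δ).rpow_const h₁).sub
    (((hasDerivAt_id' t).const_sub Δ).rpow_const h₂)).congr_deriv ?_
  ring

lemma sqrt_add_sub_sqrt_sub_le {Δ t : ℝ} (hΔ : 0 < Δ) (ht : 0 ≤ t) (htΔ : t ≤ Δ) :
    0 ≤ √(Δ + t) - √(Δ - t) ∧ √(Δ + t) - √(Δ - t) ≤ 2 * t / √Δ := by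
  have hle : √(Δ - t) ≤ √(Δ + t) := sqrt_le_sqrt (by linarith)
  have hΔle : √Δ ≤ √(Δ + t) := sqrt_le_sqrt (by linarith)
  have hprod : (√(Δ + t) - √(Δ - t)) * (√(Δ + t) + √(Δ - t)) = 2 * t := by
    rw [mul_comm, ← sq_sub_sq, sq_sqrt (by linarith), sq_sqrt (by linarith)]; ring
  refine ⟨sub_nonneg.2 hle, ?_⟩
  rw [le_div_iff₀ (sqrt_pos.2 hΔ), ← hprod]
  exact mul_le_mul_of_nonneg_left (by linarith [sqrt_nonneg (Δ - t)]) (sub_nonneg.2 hle)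

lemma rpow_seven_halves_taylor_remainder_bounds {Δ δ : ℝ} (hΔ : 0 < Δ) (hδ : 0 ≤ δ)
    (hδΔ : δ < Δ) :
    0 ≤ (Δ + δ) ^ ((7:ℝ)/2) + (Δ - δ) ^ ((7:ℝ)/2) - 2 * Δ ^ ((7:ℝ)/2)
        - 35/4 * Δ ^ ((3:ℝ)/2) * δ ^ 2 ∧
      (Δ + δ) ^ ((7:ℝ)/2) + (Δ - δ) ^ ((7:ℝ)/2) - 2 * Δ ^ ((7:ℝ)/2)
        - 35/4 * Δ ^ ((3:ℝ)/2) * δ ^ 2 ≤ 35/32 * δ ^ 4 / √Δ := by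
  have hne : ∀ t ∈ Icc 0 δ, Δ + t ≠ 0 ∧ Δ - t ≠ 0 := fun t ht =>
    ⟨by linarith [ht.1], by linarith [ht.2]⟩
  set K := 105 / (4 * √Δ)
  have h3 : ∀ t ∈ Icc 0 δ, 0 ≤ 105/8 * ((Δ + t) ^ ((1:ℝ)/2) - (Δ - t) ^ ((1:ℝ)/2)) ∧
      105/8 * ((Δ + t) ^ ((1:ℝ)/2) - (Δ - t) ^ ((1:ℝ)/2)) ≤ K * t ^ 1 / 1! := by
    intro t ht
    obtain ⟨hlo, hhi⟩ := sqrt_add_sub_sqrt_sub_le hΔ ht.1 (by linarith [ht.2])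
    simp only [← sqrt_eq_rpow, K]
    refine ⟨mul_nonneg (by norm_num) hlo, ?_⟩
    calc 105/8 * (√(Δ + t) - √(Δ - t)) ≤ 105/8 * (2 * t / √Δ) := by gcongr
      _ = _ := by field_simp; ring
  have h2 := bounds_of_hasDerivAt_bounds
    (f := fun t => 35/4 * ((Δ + t) ^ ((3:ℝ)/2) + (Δ - t) ^ ((3:ℝ)/2)) - 35/2 * Δ ^ ((3:ℝ)/2))
    (fun t ht => (((hasDerivAt_rpow_add_add_rpow_sub (Or.inl (hne t ht).1)
      (Or.inl (hne t ht).2)).const_mul _).sub_const _).congr_deriv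
        (by rw [show (3:ℝ)/2 - 1 = 1/2 by norm_num]; ring))
    (by simp only [add_zero, sub_zero]; ring) h3
  have h1 := bounds_of_hasDerivAt_bounds
    (f := fun t => 7/2 * ((Δ + t) ^ ((5:ℝ)/2) - (Δ - t) ^ ((5:ℝ)/2)) - 35/2 * Δ ^ ((3:ℝ)/2) * t)
    (fun t ht => (((hasDerivAt_rpow_add_sub_rpow_sub (Or.inl (hne t ht).1)
      (Or.inl (hne t ht).2)).const_mul _).sub ((hasDerivAt_id' t).const_mul _)).congr_deriv
        (by rw [show (5:ℝ)/2 - 1 = 3/2 by norm_num]; ring))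
    (by simp only [add_zero, sub_zero]; ring) h2
  have h0 := bounds_of_hasDerivAt_bounds
    (f := fun t => (Δ + t) ^ ((7:ℝ)/2) + (Δ - t) ^ ((7:ℝ)/2) - 2 * Δ ^ ((7:ℝ)/2)
        - 35/4 * Δ ^ ((3:ℝ)/2) * t ^ 2)
    (fun t ht => (((hasDerivAt_rpow_add_add_rpow_sub (Or.inl (hne t ht).1)
      (Or.inl (hne t ht).2)).sub_const _).sub ((hasDerivAt_pow 2 t).const_mul _)).congr_deriv
        (by rw [show (7:ℝ)/2 - 1 = 5/2 by norm_num]; ring))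
    (by simp only [add_zero, sub_zero]; ring) h1 δ ⟨hδ, le_rfl⟩
  refine ⟨h0.1, h0.2.trans_eq ?_⟩
  simp only [K, Nat.factorial]
  field_simp
  ring

lemma sq_rpow_div_two {x : ℝ} (hx : 0 ≤ x) (r : ℝ) : (x ^ 2) ^ (r / 2) = x ^ r := by
  rw [rpow_div_two_eq_sqrt r (sq_nonneg x), sqrt_sq hx]

lemma abs_correction_sub_expansion_le {Δ δ : ℝ} (hΔ : 0 < Δ) (hδ : 0 < δ) (hδΔ : δ < Δ) :
    |(4 / 35) * ((Δ + δ) ^ ((7:ℝ)/2) + (Δ - δ) ^ ((7:ℝ)/2)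
        - 2 * (δ ^ ((7:ℝ)/2) + Δ ^ ((7:ℝ)/2))) / (δ ^ 2 * (Δ - δ / 3))
      - √Δ * (1 + (1/3) * (δ / Δ) - (8/35) * (δ / Δ) ^ ((3:ℝ)/2))|
      ≤ √Δ * (δ / Δ) ^ 2 := by
  obtain ⟨w, hw, rfl⟩ : ∃ w, 0 < w ∧ Δ = w ^ 2 := ⟨√Δ, sqrt_pos.2 hΔ, (sq_sqrt hΔ.le).symm⟩
  obtain ⟨s, hs, rfl⟩ : ∃ s, 0 < s ∧ δ = s ^ 2 := ⟨√δ, sqrt_pos.2 hδ, (sq_sqrt hδ.le).symm⟩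
  have hsw : s < w := (pow_lt_pow_iff_left₀ hs.le hw.le two_ne_zero).1 hδΔ
  have hG := rpow_seven_halves_taylor_remainder_bounds hΔ hδ.le hδΔ
  rw [← div_pow]
  simp only [sq_rpow_div_two hw.le, sq_rpow_div_two hs.le, sq_rpow_div_two (div_pos hs hw).le,
    sqrt_sq hw.le, rpow_ofNat] at hG ⊢
  generalize (w ^ 2 + s ^ 2) ^ ((7:ℝ)/2) + (w ^ 2 - s ^ 2) ^ ((7:ℝ)/2) = S at hG ⊢
  set G := S - 2 * w ^ 7 - 35/4 * w ^ 3 * (s ^ 2) ^ 2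
  have hD : 0 < (s ^ 2) ^ 2 * (w ^ 2 - s ^ 2 / 3) := by
    have : 0 < w ^ 2 - s ^ 2 / 3 := by linarith
    positivity
  have hE : |4/35 * G + s ^ 8 / (9 * w) - 8/105 * (s ^ 9 / w ^ 2)| ≤ s ^ 8 / (4 * w) := by
    obtain ⟨hG₀, hG₁⟩ := hG
    set u := s ^ 8 / w
    have hu : 0 ≤ u := by positivity
    have hs9 : s ^ 9 / w ^ 2 ≤ u := calc
      s ^ 9 / w ^ 2 = s / w * u := by ring
      _ ≤ u := mul_le_of_le_one_left hu ((div_le_one hw).2 hsw.le)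
    rw [show 35/32 * (s ^ 2) ^ 4 / w = 35/32 * u by ring] at hG₁
    rw [show s ^ 8 / (9 * w) = u / 9 by ring, show s ^ 8 / (4 * w) = u / 4 by ring, abs_le]
    have : 0 ≤ s ^ 9 / w ^ 2 := by positivity
    constructor <;> linarith
  have hsplit : 4/35 * (S - 2 * (s ^ 7 + w ^ 7)) / ((s ^ 2) ^ 2 * (w ^ 2 - s ^ 2 / 3))
      - w * (1 + 1/3 * (s / w) ^ 2 - 8/35 * (s / w) ^ 3)
      = (4/35 * G + s ^ 8 / (9 * w) - 8/105 * (s ^ 9 / w ^ 2))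
        / ((s ^ 2) ^ 2 * (w ^ 2 - s ^ 2 / 3)) := by
    have : w ^ 2 * 3 - s ^ 2 ≠ 0 := by nlinarith
    simp only [G]
    field_simp
    ring
  rw [hsplit, abs_div, abs_of_pos hD]
  calc _ ≤ s ^ 8 / (4 * w) / ((s ^ 2) ^ 2 * (w ^ 2 - s ^ 2 / 3)) := by gcongr
    _ ≤ w * ((s / w) ^ 2) ^ 2 := by
        rw [div_le_iff₀ hD]
        field_simp
        nlinarith

/-- Asymptotic expansion of the finite-pulse correction factor `C_{δ,Δ}`:
`C_{δ,Δ} = √Δ (1 + (1/3)(δ/Δ) − (8/35)(δ/Δ)^{3/2} + O((δ/Δ)²))` as `δ/Δ → 0⁺`. -/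
theorem sta_correction_expansion (Δ : ℝ) (hΔ : 0 < Δ) :
    (fun δ : ℝ =>
        (4 / 35) * ((Δ + δ) ^ ((7:ℝ)/2) + (Δ - δ) ^ ((7:ℝ)/2)
            - 2 * (δ ^ ((7:ℝ)/2) + Δ ^ ((7:ℝ)/2))) / (δ ^ 2 * (Δ - δ / 3))
          - Real.sqrt Δ * (1 + (1/3) * (δ / Δ) - (8/35) * (δ / Δ) ^ ((3:ℝ)/2)))
      =O[𝓝[Set.Ioo 0 Δ] 0] fun δ : ℝ => (δ / Δ) ^ 2 := by
  refine IsBigO.of_bound (√Δ) ?_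
  filter_upwards [self_mem_nhdsWithin] with δ hδ
  rw [Real.norm_eq_abs, Real.norm_eq_abs, abs_sq]
  exact abs_correction_sub_expansion_le hΔ hδ.1 hδ.2
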